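/- Let ℓ and N be natural numbers, τ a real number, and f : ℂ → ℝ smooth (ContDiff ℝ ⊤), regarded as ℂ-valued via coercion. Define ψ_f(z) = ℓ − N·|z|²/(1+|z|²) + z·∂f(z) and Φ(z) = |z|^(2ℓ)/(1+|z|²)^N. Then for every z ∈ ℂ: ∂̄(w ↦ ψ_f(w)·(e^{f(w)}·Φ(w) − τ²))(z) = z·( ∂̄(w ↦ ∂(v ↦ e^{f(v)}·Φ(v))(w))(z) − τ²·(∂̄(w ↦ ∂f(w))(z) − N/(1+|z|²)²) ). (This is the identity ∂̄(ψ_f·(e^fΦ − τ²)) = −ι_{v^{1,0}}(∂̄∂(e^fΦ) − τ²·∂̄∂ log h) for h = e^f·h_FS^N, expressed in the coordinate z with v^{1,0} = z∂_z.) -/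

import Mathlib

open Complex ContDiff

/-- The Wirtinger derivative `∂u`. -/
noncomputable def wdz (u : ℂ → ℂ) (z : ℂ) : ℂ :=
  (1 / 2) * (fderiv ℝ u z 1 - Complex.I • fderiv ℝ u z Complex.I)

/-- The Wirtinger derivative `∂̄u`. -/
noncomputable def wdzbar (u : ℂ → ℂ) (z : ℂ) : ℂ :=
  (1 / 2) * (fderiv ℝ u z 1 + Complex.I • fderiv ℝ u z Complex.I)

/-- Common generalization of `wdz` and `wdzbar`. -/
noncomputable def wd (c : ℂ) (u : ℂ → ℂ) (z : ℂ) : ℂ :=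
  (1 / 2) * (fderiv ℝ u z 1 + c * fderiv ℝ u z Complex.I)

lemma wdz_eq (u : ℂ → ℂ) (z : ℂ) : wdz u z = wd (-Complex.I) u z := by
  simp [wdz, wd, smul_eq_mul]; ring

lemma wdzbar_eq (u : ℂ → ℂ) (z : ℂ) : wdzbar u z = wd Complex.I u z := by
  simp [wdzbar, wd, smul_eq_mul]

lemma wdz_fun_eq (u : ℂ → ℂ) : wdz u = wd (-Complex.I) u := funext (wdz_eq u)

section wdlemmas
variable {c : ℂ} {u v : ℂ → ℂ} {z : ℂ}

lemma wd_const (a : ℂ) : wd c (fun _ => a) z = 0 := by simp [wd]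

lemma wd_add (hu : DifferentiableAt ℝ u z) (hv : DifferentiableAt ℝ v z) :
    wd c (fun w => u w + v w) z = wd c u z + wd c v z := by
  simp [wd, fderiv_fun_add hu hv]; ring

lemma wd_sub (hu : DifferentiableAt ℝ u z) (hv : DifferentiableAt ℝ v z) :
    wd c (fun w => u w - v w) z = wd c u z - wd c v z := by
  simp [wd, fderiv_fun_sub hu hv]; ring

lemma wd_const_mul (a : ℂ) (hu : DifferentiableAt ℝ u z) :
    wd c (fun w => a * u w) z = a * wd c u z := by
  simp [wd, fderiv_const_mul hu a, smul_eq_mul]; ring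

lemma wd_mul (hu : DifferentiableAt ℝ u z) (hv : DifferentiableAt ℝ v z) :
    wd c (fun w => u w * v w) z = wd c u z * v z + u z * wd c v z := by
  simp [wd, fderiv_fun_mul hu hv, smul_eq_mul]; ring

lemma wd_inv (hu : DifferentiableAt ℝ u z) (hz : u z ≠ 0) :
    wd c (fun w => (u w)⁻¹) z = -(wd c u z / (u z) ^ 2) := by
  have h : HasFDerivAt (fun w => (u w)⁻¹)
      (((-(ContinuousLinearMap.mulLeftRight ℝ ℂ) (u z)⁻¹) (u z)⁻¹).comp (fderiv ℝ u z)) z :=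
    (hasFDerivAt_inv' hz).comp z hu.hasFDerivAt
  simp [wd, h.fderiv, ContinuousLinearMap.mulLeftRight]
  field_simp
  ring

lemma wd_id : wd c (fun w => w) z = (1 + c * Complex.I) / 2 := by
  simp [wd, fderiv_id']; ring

lemma wd_conj : wd c (fun w => (starRingEnd ℂ) w) z = (1 - c * Complex.I) / 2 := by
  have h : fderiv ℝ (fun w : ℂ => (starRingEnd ℂ) w) z = Complex.conjCLE.toContinuousLinearMap :=
    (Complex.conjCLE.toContinuousLinearMap.hasFDerivAt (x := z)).fderiv
  simp [wd, h, Complex.conjCLE_apply]; ring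

lemma wd_pow (n : ℕ) (hu : DifferentiableAt ℝ u z) :
    wd c (fun w => u w ^ n) z = (n : ℂ) * u z ^ (n - 1) * wd c u z := by
  induction n with
  | zero => simpa using wd_const (c := c) (z := z) 1
  | succ k ih =>
    have h : (fun w => u w ^ (k + 1)) = fun w => u w ^ k * u w := by
      funext w; rw [pow_succ]
    rw [h, wd_mul (hu.fun_pow k) hu, ih]
    rcases Nat.eq_zero_or_pos k with hk | hk
    · subst hk; simp
    · have h2 : k - 1 + 1 = k := Nat.succ_pred_eq_of_pos hk
      rw [show k + 1 - 1 = k from rfl, ← h2, pow_succ]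
      push_cast [h2]
      ring

end wdlemmas

section aux
variable {g : ℂ → ℝ} {z : ℂ}

lemma fderiv_ofReal_comp (hg : DifferentiableAt ℝ g z) :
    fderiv ℝ (fun w => ((g w : ℝ) : ℂ)) z = Complex.ofRealCLM.comp (fderiv ℝ g z) := by
  have h : HasFDerivAt (fun w => ((g w : ℝ) : ℂ)) (Complex.ofRealCLM.comp (fderiv ℝ g z)) z :=
    Complex.ofRealCLM.hasFDerivAt.comp z hg.hasFDerivAt
  exact h.fderiv

lemma fderiv_exp_ofReal_comp (hg : DifferentiableAt ℝ g z) :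
    fderiv ℝ (fun w => ((Real.exp (g w) : ℝ) : ℂ)) z
      = Complex.ofRealCLM.comp (Real.exp (g z) • fderiv ℝ g z) := by
  have h1 : HasFDerivAt (fun w => Real.exp (g w)) (Real.exp (g z) • fderiv ℝ g z) z :=
    (Real.hasDerivAt_exp (g z)).comp_hasFDerivAt z hg.hasFDerivAt
  exact (Complex.ofRealCLM.hasFDerivAt.comp z h1).fderiv

lemma wd_exp_ofReal (c : ℂ) (hg : DifferentiableAt ℝ g z) :
    wd c (fun w => ((Real.exp (g w) : ℝ) : ℂ)) z
      = ((Real.exp (g z) : ℝ) : ℂ) * wd c (fun w => ((g w : ℝ) : ℂ)) z := by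
  simp only [wd, fderiv_exp_ofReal_comp hg, fderiv_ofReal_comp hg,
    ContinuousLinearMap.comp_apply, ContinuousLinearMap.coe_smul', Pi.smul_apply,
    Complex.ofRealCLM_apply, smul_eq_mul]
  push_cast
  ring

end aux

lemma one_le_infty : (1 : WithTop ℕ∞) ≤ ∞ := by exact_mod_cast (le_top : (1 : ℕ∞) ≤ ⊤)

lemma dAt {u : ℂ → ℂ} (h : ContDiff ℝ ∞ u) (z : ℂ) : DifferentiableAt ℝ u z :=
  (h.differentiable (by simp)).differentiableAt

lemma contDiff_conj' : ContDiff ℝ ∞ (fun w : ℂ => (starRingEnd ℂ) w) :=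
  Complex.conjCLE.toContinuousLinearMap.contDiff

lemma one_add_mul_conj_ne (w : ℂ) : (1 : ℂ) + w * (starRingEnd ℂ) w ≠ 0 := by
  rw [Complex.mul_conj]
  rw [show ((1:ℂ) + (Complex.normSq w : ℝ)) = ((1 + Complex.normSq w : ℝ) : ℂ) by push_cast; ring]
  rw [Complex.ofReal_ne_zero]
  have := Complex.normSq_nonneg w
  intro h; linarith

lemma abs_sq_eq' (w : ℂ) : ((‖w‖ : ℝ) : ℂ) ^ 2 = w * (starRingEnd ℂ) w := by
  rw [← Complex.ofReal_pow, Complex.sq_norm, Complex.mul_conj]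

lemma contDiff_wd (c : ℂ) {F : ℂ → ℂ} (hF : ContDiff ℝ ∞ F) : ContDiff ℝ ∞ (wd c F) := by
  have h := (contDiff_infty_iff_fderiv.mp hF).2
  exact contDiff_const.mul ((h.clm_apply contDiff_const).add
    (contDiff_const.mul (h.clm_apply contDiff_const)))

noncomputable section mainsec

/-- `w * conj w`. -/
def gg : ℂ → ℂ := fun w => w * (starRingEnd ℂ) w
/-- `1 + w * conj w`. -/
def SS : ℂ → ℂ := fun w => 1 + gg w
/-- coerced `exp (f w)`. -/
def EE (f : ℂ → ℝ) : ℂ → ℂ := fun w => ((Real.exp (f w) : ℝ) : ℂ)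
/-- coerced `f`. -/
def ftil (f : ℂ → ℝ) : ℂ → ℂ := fun v => ((f v : ℝ) : ℂ)
/-- the weight function. -/
def FF (f : ℂ → ℝ) (ℓ N : ℕ) : ℂ → ℂ := fun w => EE f w * (gg w ^ ℓ * (SS w ^ N)⁻¹)
/-- `ψ_f`. -/
def psiC (f : ℂ → ℝ) (ℓ N : ℕ) : ℂ → ℂ :=
  fun w => ((ℓ : ℂ) - (N : ℂ) * (gg w * (SS w)⁻¹)) + w * wdz (ftil f) w

lemma contDiff_gg : ContDiff ℝ ∞ gg := contDiff_id.mul contDiff_conj'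
lemma contDiff_SS : ContDiff ℝ ∞ SS := contDiff_const.add contDiff_gg
lemma SS_ne (w : ℂ) : SS w ≠ 0 := one_add_mul_conj_ne w
lemma SSpow_ne (N : ℕ) (w : ℂ) : SS w ^ N ≠ 0 := pow_ne_zero _ (SS_ne w)

variable {f : ℂ → ℝ} {ℓ N : ℕ}

lemma contDiff_ftil (hf : ContDiff ℝ ∞ f) : ContDiff ℝ ∞ (ftil f) :=
  Complex.ofRealCLM.contDiff.comp hf
lemma contDiff_EE (hf : ContDiff ℝ ∞ f) : ContDiff ℝ ∞ (EE f) :=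
  Complex.ofRealCLM.contDiff.comp (Real.contDiff_exp.comp hf)
lemma contDiff_FF (hf : ContDiff ℝ ∞ f) : ContDiff ℝ ∞ (FF f ℓ N) :=
  (contDiff_EE hf).mul ((contDiff_gg.pow ℓ).mul ((contDiff_SS.pow N).inv (SSpow_ne N)))
lemma contDiff_wdz_ftil (hf : ContDiff ℝ ∞ f) : ContDiff ℝ ∞ (wdz (ftil f)) := by
  rw [wdz_fun_eq]; exact contDiff_wd _ (contDiff_ftil hf)
lemma contDiff_wdz_FF (hf : ContDiff ℝ ∞ f) : ContDiff ℝ ∞ (wdz (FF f ℓ N)) := by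
  rw [wdz_fun_eq]; exact contDiff_wd _ (contDiff_FF hf)
lemma contDiff_psiC (hf : ContDiff ℝ ∞ f) : ContDiff ℝ ∞ (psiC f ℓ N) :=
  (contDiff_const.sub (contDiff_const.mul (contDiff_gg.mul (contDiff_SS.inv SS_ne)))).add
    (contDiff_id.mul (contDiff_wdz_ftil hf))

lemma wd_gg (c : ℂ) (w : ℂ) :
    wd c gg w = ((1 + c * Complex.I) / 2) * (starRingEnd ℂ) w + w * ((1 - c * Complex.I) / 2) := by
  have h : wd c gg w = wd c (fun x => x * (starRingEnd ℂ) x) w := rfl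
  rw [h, wd_mul differentiableAt_fun_id (dAt contDiff_conj' w), wd_id, wd_conj]

lemma wdz_gg (w : ℂ) : wdz gg w = (starRingEnd ℂ) w := by
  rw [wdz_eq, wd_gg]
  simp only [neg_mul, Complex.I_mul_I, neg_neg]
  ring

lemma wdzbar_gg (w : ℂ) : wdzbar gg w = w := by
  rw [wdzbar_eq, wd_gg]
  simp only [Complex.I_mul_I]
  ring

lemma wd_SS (c : ℂ) (w : ℂ) : wd c SS w = wd c gg w := by
  have h : wd c SS w = wd c (fun x => (1 : ℂ) + gg x) w := rfl
  rw [h, wd_add (differentiableAt_const _) (dAt contDiff_gg w), wd_const, zero_add]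

lemma wdz_EE (hf : ContDiff ℝ ∞ f) (w : ℂ) : wdz (EE f) w = EE f w * wdz (ftil f) w := by
  rw [wdz_eq, wdz_eq]
  exact wd_exp_ofReal _ ((hf.differentiable (by simp)).differentiableAt)

lemma keyA (hf : ContDiff ℝ ∞ f) (w : ℂ) :
    psiC f ℓ N w * FF f ℓ N w = w * wdz (FF f ℓ N) w := by
  have hgg := dAt contDiff_gg w
  have hSS := dAt contDiff_SS w
  have hE := dAt (contDiff_EE hf) w
  have hpow : DifferentiableAt ℝ (fun x => gg x ^ ℓ) w := hgg.pow ℓ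
  have hSpow : DifferentiableAt ℝ (fun x => SS x ^ N) w := hSS.pow N
  have hinv : DifferentiableAt ℝ (fun x => (SS x ^ N)⁻¹) w := hSpow.inv (SSpow_ne N w)
  have h1 : wdz (FF f ℓ N) w
      = EE f w * wdz (ftil f) w * (gg w ^ ℓ * (SS w ^ N)⁻¹)
        + EE f w * (((ℓ : ℂ) * gg w ^ (ℓ - 1) * (starRingEnd ℂ) w) * (SS w ^ N)⁻¹
            + gg w ^ ℓ * (-(((N : ℂ) * SS w ^ (N - 1) * (starRingEnd ℂ) w) / (SS w ^ N) ^ 2))) := by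
    have h0 : wdz (FF f ℓ N) w = wd (-Complex.I) (fun x => EE f x * (gg x ^ ℓ * (SS x ^ N)⁻¹)) w := by
      rw [← wdz_eq]; rfl
    rw [h0, wd_mul hE (hpow.fun_mul hinv), wd_mul hpow hinv, wd_inv hSpow (SSpow_ne N w),
      wd_pow ℓ hgg, wd_pow N hSS, wd_SS]
    rw [show wd (-Complex.I) (EE f) w = wdz (EE f) w from (wdz_eq _ _).symm,
      show wd (-Complex.I) gg w = wdz gg w from (wdz_eq _ _).symm, wdz_gg, wdz_EE hf]
  rw [h1]
  simp only [psiC, FF, gg, SS]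
  set a := wdz (ftil f) w
  set e := EE f w
  set b := (starRingEnd ℂ) w
  have hS : (1 : ℂ) + w * b ≠ 0 := one_add_mul_conj_ne w
  rcases ℓ with _ | l <;> rcases N with _ | n <;>
    simp only [Nat.add_sub_cancel, Nat.zero_sub, pow_zero, Nat.cast_zero, Nat.cast_succ] <;>
    field_simp <;> ring

lemma keyC (hf : ContDiff ℝ ∞ f) (z : ℂ) :
    wdzbar (psiC f ℓ N) z = z * wd Complex.I (wdz (ftil f)) z - (N : ℂ) * z / SS z ^ 2 := by
  have hgg := dAt contDiff_gg z
  have hSS := dAt contDiff_SS z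
  have hinv : DifferentiableAt ℝ (fun x => (SS x)⁻¹) z := hSS.inv (SS_ne z)
  have hdf := dAt (contDiff_wdz_ftil hf) z
  have h0 : wdzbar (psiC f ℓ N) z
      = wd Complex.I (fun w => ((ℓ : ℂ) - (N : ℂ) * (gg w * (SS w)⁻¹)) + w * wdz (ftil f) w) z := by
    rw [wdzbar_eq]; rfl
  rw [h0, wd_add ((differentiableAt_const _).fun_sub ((differentiableAt_const _).fun_mul (hgg.fun_mul hinv)))
      (differentiableAt_fun_id.fun_mul hdf),
    wd_sub (differentiableAt_const _) ((differentiableAt_const _).fun_mul (hgg.fun_mul hinv)),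
    wd_const, wd_const_mul _ (hgg.fun_mul hinv), wd_mul hgg hinv, wd_mul differentiableAt_fun_id hdf,
    wd_id, wd_inv hSS (SS_ne z), wd_SS, ← wdzbar_eq, wdzbar_gg]
  simp only [Complex.I_mul_I, gg, SS]
  have hS : (1 : ℂ) + z * (starRingEnd ℂ) z ≠ 0 := one_add_mul_conj_ne z
  field_simp
  ring

end mainsec

theorem dbar_psi_f_mixed (ℓ N : ℕ) (τ : ℝ) (f : ℂ → ℝ) (hf : ContDiff ℝ (⊤ : ℕ∞) f) (z : ℂ) :
    wdzbar (fun w : ℂ =>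
        ((((ℓ : ℝ) - (N : ℝ) * ‖w‖ ^ 2 / (1 + ‖w‖ ^ 2) : ℝ) : ℂ)
            + w * wdz (fun v : ℂ => ((f v : ℝ) : ℂ)) w) *
          (((Real.exp (f w) * (‖w‖ ^ (2 * ℓ) / (1 + ‖w‖ ^ 2) ^ N) - τ ^ 2 : ℝ)) : ℂ)) z
      = z * (wdzbar (fun w : ℂ =>
            wdz (fun v : ℂ =>
              ((Real.exp (f v) * (‖v‖ ^ (2 * ℓ) / (1 + ‖v‖ ^ 2) ^ N) : ℝ) : ℂ)) w) z
          - (τ : ℂ) ^ 2 * (wdzbar (fun w : ℂ => wdz (fun v : ℂ => ((f v : ℝ) : ℂ)) w) z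
              - (N : ℂ) / (1 + (‖z‖ : ℂ) ^ 2) ^ 2)) := by
  have hf' : ContDiff ℝ ∞ f := hf.of_le (by simp)
  have hftil : (fun v : ℂ => ((f v : ℝ) : ℂ)) = ftil f := rfl
  have coerψ : ∀ w : ℂ,
      ((((ℓ : ℝ) - (N : ℝ) * ‖w‖ ^ 2 / (1 + ‖w‖ ^ 2) : ℝ)) : ℂ)
        = (ℓ : ℂ) - (N : ℂ) * (gg w * (SS w)⁻¹) := by
    intro w
    push_cast
    rw [abs_sq_eq']
    simp only [gg, SS]
    rw [div_eq_mul_inv]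
    ring
  have coerF : ∀ w : ℂ,
      ((Real.exp (f w) * (‖w‖ ^ (2 * ℓ) / (1 + ‖w‖ ^ 2) ^ N) : ℝ) : ℂ)
        = FF f ℓ N w := by
    intro w
    rw [Complex.ofReal_mul, Complex.ofReal_div, Complex.ofReal_pow, Complex.ofReal_pow,
      Complex.ofReal_add, Complex.ofReal_one, Complex.ofReal_pow, pow_mul, abs_sq_eq']
    simp only [FF, EE, gg, SS]
    rw [div_eq_mul_inv]
  have hFfun : (fun v : ℂ =>
      ((Real.exp (f v) * (‖v‖ ^ (2 * ℓ) / (1 + ‖v‖ ^ 2) ^ N) : ℝ) : ℂ))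
        = FF f ℓ N := funext coerF
  have hfunL : (fun w : ℂ =>
        ((((ℓ : ℝ) - (N : ℝ) * ‖w‖ ^ 2 / (1 + ‖w‖ ^ 2) : ℝ) : ℂ)
            + w * wdz (fun v : ℂ => ((f v : ℝ) : ℂ)) w) *
          (((Real.exp (f w) * (‖w‖ ^ (2 * ℓ) / (1 + ‖w‖ ^ 2) ^ N) - τ ^ 2 : ℝ)) : ℂ))
      = fun w => w * wdz (FF f ℓ N) w - (τ : ℂ) ^ 2 * psiC f ℓ N w := by
    funext w
    rw [coerψ w, Complex.ofReal_sub, Complex.ofReal_pow, coerF w, hftil]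
    have h : ((ℓ : ℂ) - (N : ℂ) * (gg w * (SS w)⁻¹)) + w * wdz (ftil f) w = psiC f ℓ N w := rfl
    rw [h, mul_sub, keyA hf' w]
    ring
  rw [hfunL, hFfun, hftil]
  rw [show (fun w : ℂ => wdz (FF f ℓ N) w) = wdz (FF f ℓ N) from rfl,
    show (fun w : ℂ => wdz (ftil f) w) = wdz (ftil f) from rfl]
  have habs : (1 : ℂ) + (‖z‖ : ℂ) ^ 2 = SS z := by
    rw [abs_sq_eq']; rfl
  rw [habs]
  have hdFF := dAt (contDiff_wdz_FF (ℓ := ℓ) (N := N) hf') z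
  have dψ := dAt (contDiff_psiC (ℓ := ℓ) (N := N) hf') z
  have d1 : DifferentiableAt ℝ (fun w : ℂ => w * wdz (FF f ℓ N) w) z :=
    differentiableAt_fun_id.mul hdFF
  have d2 : DifferentiableAt ℝ (fun w : ℂ => (τ : ℂ) ^ 2 * psiC f ℓ N w) z :=
    (differentiableAt_const _).mul dψ
  rw [wdzbar_eq, wd_sub d1 d2, wd_mul differentiableAt_fun_id hdFF, wd_id, wd_const_mul _ dψ]
  rw [show wd Complex.I (psiC f ℓ N) z = wdzbar (psiC f ℓ N) z from (wdzbar_eq _ _).symm,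
    keyC hf' z]
  rw [show wdzbar (wdz (FF f ℓ N)) z = wd Complex.I (wdz (FF f ℓ N)) z from wdzbar_eq _ _,
    show wdzbar (wdz (ftil f)) z = wd Complex.I (wdz (ftil f)) z from wdzbar_eq _ _]
  rw [Complex.I_mul_I]
  have hS := SS_ne z
  field_simp
  ring
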